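/- Let P, Q be persistence diagrams each contained in a square of side Δ, with all points at distance at least 1 pairwise and at least 1 from the diagonal. Under a uniformly random shift of the quadtree, the expected modified L₁ distance satisfies E[|V^P − V^Q|_T] ≤ C·log Δ·d_W(P,Q) for a universal constant C, where the shift is uniform in [0,Δ]² and the expectation is over the shift. -/

import Mathlib

noncomputable section
open Finset Classical MeasureTheory

/-- Points in the plane with the Euclidean norm. -/
abbrev Pt := EuclideanSpace ℝ (Fin 2)

/-- Orthogonal projection onto the diagonal line `y = x`. -/
def proj (p : Pt) : Pt := WithLp.toLp 2 (fun _ => (p 0 + p 1) / 2)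

/-- An augmented matching between two indexed multisets of points: each left point is
either matched to a right point (injectively) or to its diagonal projection; right
points not in the image are matched to their diagonal projections. -/
structure AugMatching (m n : ℕ) where
  σ : Fin m → Option (Fin n)
  inj : ∀ i i' j, σ i = some j → σ i' = some j → i = i'

/-- The total Euclidean cost of an augmented matching. -/
def matchCost {m n : ℕ} (P : Fin m → Pt) (Q : Fin n → Pt) (M : AugMatching m n) : ℝ :=
  (∑ i, (M.σ i).elim (dist (P i) (proj (P i))) (fun j => dist (P i) (Q j))) +
    ∑ j, if ∃ i, M.σ i = some j then 0 else dist (Q j) (proj (Q j))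

/-- The 1-Wasserstein distance between two persistence diagrams: the infimum of the
cost over all augmented matchings. -/
def dW {m n : ℕ} (P : Fin m → Pt) (Q : Fin n → Pt) : ℝ :=
  sInf {c | ∃ M : AugMatching m n, matchCost P Q M = c}

/-- Number of points of `P` in the cell with index `(a, b)` of the grid of side `s`
shifted by `t` (a point `x` is in cell `(a,b)` iff `⌊(x₀+t₁)/s⌋ = a` and `⌊(x₁+t₂)/s⌋ = b`). -/
def sCellCount {ι : Type*} [Fintype ι] (P : ι → Pt) (t : ℝ × ℝ) (s : ℝ) (a b : ℤ) : ℕ :=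
  (Finset.univ.filter fun i =>
    ⌊(P i 0 + t.1) / s⌋ = a ∧ ⌊(P i 1 + t.2) / s⌋ = b).card

/-- The shifted cell `(a, b)` of side `s` is terminal: it intersects the diagonal `y = x`. -/
def sTerminal (t : ℝ × ℝ) (s : ℝ) (a b : ℤ) : Prop :=
  ∃ r : ℝ, ⌊(r + t.1) / s⌋ = a ∧ ⌊(r + t.2) / s⌋ = b

/-- The modified `L₁` distance `|V^P - V^Q|_T` for the quadtree with grids of side
lengths `1/2, 1, …, 2^L` shifted by `t`: terminal (diagonal-intersecting) cell
coordinates are zeroed out. -/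
def sModL1 (L : ℕ) {ι κ : Type*} [Fintype ι] [Fintype κ] (P : ι → Pt) (Q : κ → Pt)
    (t : ℝ × ℝ) : ℝ :=
  ∑ j ∈ range (L + 2), ((2 : ℝ) ^ j / 2) *
    ∑ a ∈ Finset.Icc (0 : ℤ) (2 ^ (L + 2)), ∑ b ∈ Finset.Icc (0 : ℤ) (2 ^ (L + 2)),
      if sTerminal t ((2 : ℝ) ^ j / 2) a b then 0
      else |(sCellCount P t ((2 : ℝ) ^ j / 2) a b : ℝ) -
            (sCellCount Q t ((2 : ℝ) ^ j / 2) a b : ℝ)|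

/-!
Fix a shift `t` and an augmented matching `M`. Writing the cell counts of `P` and `Q` as sums of
cell indicators of single points, the triangle inequality bounds the level-`s` term of
`|V^P - V^Q|_T` by the cost of `M` in which a matched pair `(p, q)` is charged `2` for each
coordinate in which a grid line of side `s` separates `p` from `q`, and a point `p` sent to the
diagonal is charged `1` when a horizontal grid line separates `p 0` from `p 1` (otherwise the cell
of `p` meets the diagonal, so it is terminal). A uniformly shifted grid of side `s` separates two
reals at distance `δ` with probability at most `2δ / s`, so the expected level-`s` term, scaled
by `s`, is `O(cost M)`. Summing over the `L + 2` levels and taking the infimum over `M` gives the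
bound `O(L) · d_W(P, Q)`.
-/

def gridSep (s u v : ℝ) : Set ℝ := {x | ⌊(u + x) / s⌋ ≠ ⌊(v + x) / s⌋}

lemma gridSep_comm (s u v : ℝ) : gridSep s u v = gridSep s v u := by
  ext x; exact ne_comm

lemma measurableSet_gridSep (s u v : ℝ) : MeasurableSet (gridSep s u v) :=
  (measurableSet_eq_fun ((measurable_const_add u).div_const s).floor
    ((measurable_const_add v).div_const s).floor).compl

lemma gridSep_inter_Icc_subset {s T u v : ℝ} (hs : 0 < s) (hu : 0 ≤ u) (huv : u ≤ v)
    (hv : v ≤ T) :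
    gridSep s u v ∩ Set.Icc 0 T ⊆
      ⋃ k ∈ Finset.Icc (1 : ℤ) ⌊2 * T / s⌋, Set.Ico (k * s - v) (k * s - u) := by
  rintro x ⟨hsep, hx0, hxT⟩
  set k := ⌊(v + x) / s⌋
  have hlt : ⌊(u + x) / s⌋ < k :=
    (Int.floor_le_floor (by gcongr)).lt_of_ne hsep
  have hks : k * s ≤ v + x := (le_div_iff₀ hs).mp (Int.floor_le _)
  have hus : u + x < k * s := by
    rw [← div_lt_iff₀ hs]; exact Int.floor_lt.mp hlt
  have hk1 : 1 ≤ k := by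
    have : (0 : ℝ) < k := pos_of_mul_pos_left (by linarith) hs.le
    exact_mod_cast this
  have hkK : k ≤ ⌊2 * T / s⌋ := Int.le_floor.mpr ((le_div_iff₀ hs).mpr (by linarith))
  exact Set.mem_biUnion (Finset.mem_Icc.mpr ⟨hk1, hkK⟩) ⟨by linarith, by linarith⟩

lemma volume_real_gridSep_inter_Icc_le {s T u v : ℝ} (hs : 0 < s) (hu : u ∈ Set.Icc 0 T)
    (hv : v ∈ Set.Icc 0 T) :
    volume.real (gridSep s u v ∩ Set.Icc 0 T) ≤ 2 * T / s * |u - v| := by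
  wlog huv : u ≤ v generalizing u v
  · rw [gridSep_comm, abs_sub_comm]; exact this hv hu (le_of_not_ge huv)
  have hT : 0 ≤ T := hu.1.trans hu.2
  calc volume.real (gridSep s u v ∩ Set.Icc 0 T)
      ≤ volume.real
          (⋃ k ∈ Finset.Icc (1 : ℤ) ⌊2 * T / s⌋, Set.Ico (k * s - v) (k * s - u)) :=
        measureReal_mono (gridSep_inter_Icc_subset hs hu.1 huv hv.2)
          (measure_biUnion_lt_top (Finset.finite_toSet _) fun _ _ => measure_Ico_lt_top).ne
    _ ≤ ∑ k ∈ Finset.Icc (1 : ℤ) ⌊2 * T / s⌋, |u - v| := by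
        refine (measureReal_biUnion_finset_le _ _).trans (Finset.sum_le_sum fun k _ => ?_)
        rw [Real.volume_real_Ico, abs_of_nonpos (by linarith)]; simp [huv]
    _ ≤ 2 * T / s * |u - v| := by
        rw [Finset.sum_const, Int.card_Icc, nsmul_eq_mul]
        gcongr
        calc ((⌊2 * T / s⌋ + 1 - 1).toNat : ℝ) = ((max ⌊2 * T / s⌋ 0 : ℤ) : ℝ) := by
              rw [add_sub_cancel_right]; exact_mod_cast Int.toNat_eq_max _
          _ ≤ 2 * T / s := by push_cast; exact max_le (Int.floor_le _) (by positivity)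

lemma setIntegral_prod_fst (f : ℝ → ℝ) (S S' : Set ℝ) :
    ∫ z in S ×ˢ S', f z.1 = volume.real S' * ∫ x in S, f x := by
  rw [Measure.volume_eq_prod]
  simpa [mul_comm] using setIntegral_prod_mul f 1 S S'

lemma setIntegral_prod_snd (f : ℝ → ℝ) (S S' : Set ℝ) :
    ∫ z in S ×ˢ S', f z.2 = volume.real S * ∫ y in S', f y := by
  rw [Measure.volume_eq_prod]
  simpa using setIntegral_prod_mul 1 f S S'

lemma setIntegral_indicator_gridSep_le {s T u v : ℝ} (hs : 0 < s) (hu : u ∈ Set.Icc 0 T)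
    (hv : v ∈ Set.Icc 0 T) :
    ∫ x in Set.Icc 0 T, (gridSep s u v).indicator 1 x ≤ 2 * T / s * |u - v| := by
  rw [integral_indicator_one (measurableSet_gridSep s u v),
    measureReal_restrict_apply (measurableSet_gridSep s u v)]
  exact volume_real_gridSep_inter_Icc_le hs hu hv

lemma abs_sub_add_abs_sub_le_sqrt_two_mul_dist (p q : Pt) :
    |p 0 - q 0| + |p 1 - q 1| ≤ √2 * dist p q := by
  rw [EuclideanSpace.dist_eq, Fin.sum_univ_two, Real.dist_eq, Real.dist_eq,
    ← Real.sqrt_mul zero_le_two, Real.le_sqrt (by positivity) (by positivity)]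
  nlinarith [sq_nonneg (|p 0 - q 0| - |p 1 - q 1|)]

lemma dist_proj (p : Pt) : dist p (proj p) = |p 1 - p 0| / √2 := by
  rw [EuclideanSpace.dist_eq, Fin.sum_univ_two, Real.dist_eq, Real.dist_eq,
    ← Real.sqrt_sq_eq_abs (p 1 - p 0), ← Real.sqrt_div' _ zero_le_two]
  simp only [proj, sq_abs]
  ring_nf

def pairCut (s : ℝ) (t : ℝ × ℝ) (p q : Pt) : ℝ :=
  2 * ((gridSep s (p 0) (q 0)).indicator 1 t.1 + (gridSep s (p 1) (q 1)).indicator 1 t.2)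

def diagCut (s : ℝ) (t : ℝ × ℝ) (p : Pt) : ℝ := (gridSep s (p 0) (p 1)).indicator 1 t.2

section Integrals

variable {s T : ℝ} {K : Set (ℝ × ℝ)}

lemma integrableOn_gridSep_fst (hK : volume K ≠ ⊤) (u v : ℝ) :
    IntegrableOn (fun t => (gridSep s u v).indicator (1 : ℝ → ℝ) t.1) K :=
  (integrableOn_const hK (C := (1 : ℝ))).indicator (measurable_fst (measurableSet_gridSep ..))

lemma integrableOn_gridSep_snd (hK : volume K ≠ ⊤) (u v : ℝ) :
    IntegrableOn (fun t => (gridSep s u v).indicator (1 : ℝ → ℝ) t.2) K :=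
  (integrableOn_const hK (C := (1 : ℝ))).indicator (measurable_snd (measurableSet_gridSep ..))

lemma integrableOn_pairCut (hK : volume K ≠ ⊤) (p q : Pt) :
    IntegrableOn (fun t => pairCut s t p q) K :=
  ((integrableOn_gridSep_fst hK _ _).add (integrableOn_gridSep_snd hK _ _)).const_mul 2

lemma integrableOn_diagCut (hK : volume K ≠ ⊤) (p : Pt) :
    IntegrableOn (fun t => diagCut s t p) K :=
  integrableOn_gridSep_snd hK _ _

lemma volume_square_ne_top (T : ℝ) : volume (Set.Icc (0 : ℝ) T ×ˢ Set.Icc 0 T) ≠ ⊤ :=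
  (isCompact_Icc.prod isCompact_Icc).measure_lt_top.ne

lemma mul_setIntegral_pairCut_le (hs : 0 < s) {p q : Pt} (hp : ∀ k, p k ∈ Set.Icc 0 T)
    (hq : ∀ k, q k ∈ Set.Icc 0 T) :
    s * ∫ t in Set.Icc 0 T ×ˢ Set.Icc 0 T, pairCut s t p q ≤ 4 * √2 * T ^ 2 * dist p q := by
  have hT : 0 ≤ T := (hp 0).1.trans (hp 0).2
  have hK := volume_square_ne_top T
  have h0 := setIntegral_indicator_gridSep_le hs (hp 0) (hq 0)
  have h1 := setIntegral_indicator_gridSep_le hs (hp 1) (hq 1)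
  unfold pairCut
  rw [integral_const_mul, integral_add, setIntegral_prod_fst, setIntegral_prod_snd]
  rw [Real.volume_real_Icc_of_le hT, sub_zero]
  calc _ ≤ s * (2 * (T * (2 * T / s * |p 0 - q 0|) + T * (2 * T / s * |p 1 - q 1|))) := by
        gcongr
    _ = 4 * T ^ 2 * (|p 0 - q 0| + |p 1 - q 1|) := by field_simp; ring
    _ ≤ 4 * T ^ 2 * (√2 * dist p q) := by
        gcongr; exact abs_sub_add_abs_sub_le_sqrt_two_mul_dist p q
    _ = 4 * √2 * T ^ 2 * dist p q := by ring
  exacts [integrableOn_gridSep_fst hK _ _, integrableOn_gridSep_snd hK _ _]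

lemma mul_setIntegral_diagCut_le (hs : 0 < s) {p : Pt} (hp : ∀ k, p k ∈ Set.Icc 0 T) :
    s * ∫ t in Set.Icc 0 T ×ˢ Set.Icc 0 T, diagCut s t p ≤
      4 * √2 * T ^ 2 * dist p (proj p) := by
  have hT : 0 ≤ T := (hp 0).1.trans (hp 0).2
  unfold diagCut
  rw [setIntegral_prod_snd, Real.volume_real_Icc_of_le hT, sub_zero, dist_proj, abs_sub_comm]
  calc _ ≤ s * (T * (2 * T / s * |p 0 - p 1|)) := by
        gcongr; exact setIntegral_indicator_gridSep_le hs (hp 0) (hp 1)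
    _ = 2 * T ^ 2 * |p 0 - p 1| := by field_simp
    _ ≤ 4 * T ^ 2 * |p 0 - p 1| := by gcongr; norm_num
    _ = 4 * √2 * T ^ 2 * (|p 0 - p 1| / √2) := by field_simp

end Integrals

section AugCost

variable {α : Type*} {m n : ℕ} (M : AugMatching m n) (P : Fin m → α) (Q : Fin n → α)

def augCost (c : α → α → ℝ) (d : α → ℝ) : ℝ :=
  (∑ i, (M.σ i).elim (d (P i)) (fun j => c (P i) (Q j))) +
    ∑ j, if ∃ i, M.σ i = some j then 0 else d (Q j)

lemma matchCost_eq_augCost (P : Fin m → Pt) (Q : Fin n → Pt) :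
    matchCost P Q M = augCost M P Q dist (fun p => dist p (proj p)) :=
  rfl

variable {M P Q}

lemma augCost_mono {c c' : α → α → ℝ} {d d' : α → ℝ}
    (hc : ∀ i j, c (P i) (Q j) ≤ c' (P i) (Q j)) (hdP : ∀ i, d (P i) ≤ d' (P i))
    (hdQ : ∀ j, d (Q j) ≤ d' (Q j)) :
    augCost M P Q c d ≤ augCost M P Q c' d' := by
  unfold augCost
  gcongr with i _ j
  · cases M.σ i with
    | none => exact hdP i
    | some j => exact hc i j
  · split_ifs
    exacts [le_rfl, hdQ j]

lemma augCost_nonneg {c : α → α → ℝ} {d : α → ℝ} (hc : ∀ i j, 0 ≤ c (P i) (Q j))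
    (hdP : ∀ i, 0 ≤ d (P i)) (hdQ : ∀ j, 0 ≤ d (Q j)) :
    0 ≤ augCost M P Q c d := by
  refine add_nonneg (Finset.sum_nonneg fun i _ => ?_) (Finset.sum_nonneg fun j _ => ?_)
  · cases M.σ i
    exacts [hdP i, hc i _]
  · split_ifs
    exacts [le_rfl, hdQ j]

lemma mul_augCost (k : ℝ) (c : α → α → ℝ) (d : α → ℝ) :
    k * augCost M P Q c d = augCost M P Q (fun p q => k * c p q) (fun p => k * d p) := by
  simp only [augCost, mul_add, Finset.mul_sum]
  congr 1 <;> refine Finset.sum_congr rfl fun i _ => ?_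
  · cases M.σ i <;> rfl
  · split_ifs <;> simp

variable {X : Type*} [MeasurableSpace X] {μ : Measure X}
  {c : X → α → α → ℝ} {d : X → α → ℝ}

lemma integrable_augCost (hc : ∀ p q, Integrable (fun x => c x p q) μ)
    (hd : ∀ p, Integrable (fun x => d x p) μ) :
    Integrable (fun x => augCost M P Q (c x) (d x)) μ := by
  refine (integrable_finsetSum _ fun i _ => ?_).add (integrable_finsetSum _ fun j _ => ?_)
  · cases M.σ i
    exacts [hd _, hc _ _]
  · split_ifs
    exacts [integrable_zero _ _ _, hd _]

lemma integral_augCost (hc : ∀ p q, Integrable (fun x => c x p q) μ)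
    (hd : ∀ p, Integrable (fun x => d x p) μ) :
    ∫ x, augCost M P Q (c x) (d x) ∂μ =
      augCost M P Q (fun p q => ∫ x, c x p q ∂μ) (fun p => ∫ x, d x p ∂μ) := by
  have hP : ∀ i,
      Integrable (fun x => (M.σ i).elim (d x (P i)) (fun j => c x (P i) (Q j))) μ := by
    intro i; cases M.σ i
    exacts [hd _, hc _ _]
  have hQ : ∀ j, Integrable (fun x => if ∃ i, M.σ i = some j then 0 else d x (Q j)) μ := by
    intro j; split_ifs
    exacts [integrable_zero _ _ _, hd _]
  unfold augCost
  rw [integral_add (integrable_finsetSum _ fun i _ => hP i)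
      (integrable_finsetSum _ fun j _ => hQ j),
    integral_finsetSum _ fun i _ => hP i, integral_finsetSum _ fun j _ => hQ j]
  congr 1 <;> refine Finset.sum_congr rfl fun i _ => ?_
  · cases M.σ i <;> rfl
  · split_ifs <;> simp

end AugCost

lemma sum_eq_sum_matched_add_sum_unmatched {β : Type*} [AddCommMonoid β] {m n : ℕ}
    (M : AugMatching m n) (f : Fin n → β) :
    ∑ j, f j = ∑ i, (M.σ i).elim 0 f + ∑ j, if ∃ i, M.σ i = some j then 0 else f j := by
  have hmatched : ∀ j, ∑ i, (if M.σ i = some j then f j else 0) =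
      if ∃ i, M.σ i = some j then f j else 0 := by
    intro j
    split_ifs with h
    · obtain ⟨i₀, hi₀⟩ := h
      rw [Finset.sum_eq_single i₀ (fun i _ hi => if_neg fun h => hi (M.inj i i₀ j h hi₀))
        (by simp), if_pos hi₀]
    · exact Finset.sum_eq_zero fun i _ => if_neg fun hi => h ⟨i, hi⟩
  have hσ : ∀ i, (M.σ i).elim 0 f = ∑ j, if M.σ i = some j then f j else 0 := by
    intro i; cases M.σ i <;> simp
  rw [Finset.sum_congr rfl fun i _ => hσ i, Finset.sum_comm, Finset.sum_congr rfl fun j _ =>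
    hmatched j, ← Finset.sum_add_distrib]
  exact Finset.sum_congr rfl fun j _ => by split_ifs <;> simp

def cellInd (t : ℝ × ℝ) (s : ℝ) (p : Pt) (a b : ℤ) : ℝ :=
  if ⌊(p 0 + t.1) / s⌋ = a ∧ ⌊(p 1 + t.2) / s⌋ = b then 1 else 0

/-- The paper's `|w|_T` at a single level of the quadtree. -/
def termL1 (t : ℝ × ℝ) (s : ℝ) (A B : Finset ℤ) (w : ℤ → ℤ → ℝ) : ℝ :=
  ∑ a ∈ A, ∑ b ∈ B, if sTerminal t s a b then 0 else |w a b|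

section Cells

variable (t : ℝ × ℝ) (s : ℝ) (A B : Finset ℤ)

lemma cast_sCellCount {ι : Type*} [Fintype ι] (P : ι → Pt) :
    (fun a b => (sCellCount P t s a b : ℝ)) = ∑ i, cellInd t s (P i) := by
  funext a b
  simp [sCellCount, cellInd, Finset.sum_apply]

lemma termL1_nonneg (w : ℤ → ℤ → ℝ) : 0 ≤ termL1 t s A B w :=
  Finset.sum_nonneg fun _ _ => Finset.sum_nonneg fun _ _ => by split_ifs <;> simp

lemma termL1_zero : termL1 t s A B 0 = 0 := by simp [termL1]

lemma termL1_neg (w : ℤ → ℤ → ℝ) : termL1 t s A B (-w) = termL1 t s A B w := by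
  simp [termL1]

lemma termL1_add_le (w w' : ℤ → ℤ → ℝ) :
    termL1 t s A B (w + w') ≤ termL1 t s A B w + termL1 t s A B w' := by
  simp only [termL1, ← Finset.sum_add_distrib]
  gcongr with a _ b _
  split_ifs
  · simp
  · exact abs_add_le _ _

lemma termL1_sub_le (w w' : ℤ → ℤ → ℝ) :
    termL1 t s A B (w - w') ≤ termL1 t s A B w + termL1 t s A B w' := by
  simpa [sub_eq_add_neg, termL1_neg] using termL1_add_le t s A B w (-w')

lemma termL1_sum_le {ι : Type*} (I : Finset ι) (w : ι → ℤ → ℤ → ℝ) :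
    termL1 t s A B (∑ i ∈ I, w i) ≤ ∑ i ∈ I, termL1 t s A B (w i) := by
  induction I using Finset.induction_on with
  | empty => simp [termL1_zero]
  | insert i I hi ih =>
    rw [Finset.sum_insert hi, Finset.sum_insert hi]
    exact (termL1_add_le ..).trans (by gcongr)

lemma termL1_cellInd_le_one (p : Pt) : termL1 t s A B (cellInd t s p) ≤ 1 := by
  calc termL1 t s A B (cellInd t s p) ≤ ∑ a ∈ A, ∑ b ∈ B, cellInd t s p a b := by
        unfold termL1 cellInd
        gcongr with a _ b _
        split_ifs <;> simp
    _ ≤ 1 := by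
        simp only [cellInd, ite_and, Finset.sum_ite_eq, Finset.sum_ite_irrel, Finset.sum_const_zero]
        split_ifs <;> norm_num

lemma termL1_cellInd_le_diagCut (p : Pt) : termL1 t s A B (cellInd t s p) ≤ diagCut s t p := by
  by_cases h : t.2 ∈ gridSep s (p 0) (p 1)
  · rw [diagCut, Set.indicator_of_mem h]
    exact termL1_cellInd_le_one t s A B p
  · rw [diagCut, Set.indicator_of_notMem h]
    refine (Finset.sum_eq_zero fun a _ => Finset.sum_eq_zero fun b _ => ?_).le
    simp only [cellInd]
    split_ifs with hterm hcell
    · rfl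
    · exact absurd ⟨p 0, hcell.1, (not_not.mp h).trans hcell.2⟩ hterm
    · simp

lemma termL1_cellInd_sub_le_pairCut (p q : Pt) :
    termL1 t s A B (cellInd t s p - cellInd t s q) ≤ pairCut s t p q := by
  by_cases hsame :
      ⌊(p 0 + t.1) / s⌋ = ⌊(q 0 + t.1) / s⌋ ∧ ⌊(p 1 + t.2) / s⌋ = ⌊(q 1 + t.2) / s⌋
  · have : cellInd t s p = cellInd t s q := by
      funext a b; simp only [cellInd, hsame]
    rw [this, sub_self, termL1_zero, pairCut, Set.indicator_apply, Set.indicator_apply]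
    split_ifs <;> norm_num
  · calc termL1 t s A B (cellInd t s p - cellInd t s q)
        ≤ termL1 t s A B (cellInd t s p) + termL1 t s A B (cellInd t s q) := termL1_sub_le ..
      _ ≤ 1 + 1 := add_le_add (termL1_cellInd_le_one ..) (termL1_cellInd_le_one ..)
      _ ≤ pairCut s t p q := by
        simp only [pairCut, Set.indicator_apply, gridSep, Set.mem_ofPred_eq]
        split_ifs <;> simp_all <;> norm_num

lemma termL1_cellCount_sub_le_augCost {m n : ℕ} (M : AugMatching m n) (P : Fin m → Pt)
    (Q : Fin n → Pt) :
    termL1 t s A B (fun a b => (sCellCount P t s a b : ℝ) - sCellCount Q t s a b) ≤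
      augCost M P Q (pairCut s t) (diagCut s t) := by
  set e := cellInd t s
  have hsplit : (fun a b => (sCellCount P t s a b : ℝ) - sCellCount Q t s a b) =
      (∑ i, (e (P i) - (M.σ i).elim 0 (fun j => e (Q j)))) -
        ∑ j, if ∃ i, M.σ i = some j then 0 else e (Q j) := by
    change (fun a b => (sCellCount P t s a b : ℝ)) - (fun a b => (sCellCount Q t s a b : ℝ)) = _
    rw [cast_sCellCount, cast_sCellCount, sum_eq_sum_matched_add_sum_unmatched M,
      Finset.sum_sub_distrib]
    abel
  calc termL1 t s A B (fun a b => (sCellCount P t s a b : ℝ) - sCellCount Q t s a b)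
      ≤ (∑ i, termL1 t s A B (e (P i) - (M.σ i).elim 0 (fun j => e (Q j)))) +
          ∑ j, termL1 t s A B (if ∃ i, M.σ i = some j then 0 else e (Q j)) := by
        rw [hsplit]
        exact (termL1_sub_le ..).trans (add_le_add (termL1_sum_le ..) (termL1_sum_le ..))
    _ = augCost M P Q (fun p q => termL1 t s A B (e p - e q)) (fun p => termL1 t s A B (e p)) := by
        unfold augCost
        congr 1 <;> refine Finset.sum_congr rfl fun i _ => ?_
        · cases M.σ i <;> simp
        · split_ifs <;> simp [termL1_zero]
    _ ≤ augCost M P Q (pairCut s t) (diagCut s t) :=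
        augCost_mono (fun _ _ => termL1_cellInd_sub_le_pairCut ..)
          (fun _ => termL1_cellInd_le_diagCut ..) (fun _ => termL1_cellInd_le_diagCut ..)

end Cells

section Diagrams

variable {m n : ℕ} {P : Fin m → Pt} {Q : Fin n → Pt}

lemma matchCost_nonneg (M : AugMatching m n) : 0 ≤ matchCost P Q M := by
  rw [matchCost_eq_augCost]
  exact augCost_nonneg (fun _ _ => dist_nonneg) (fun _ => dist_nonneg) (fun _ => dist_nonneg)

lemma le_mul_dW {x c : ℝ} (hc : 0 < c) (h : ∀ M, x ≤ c * matchCost P Q M) :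
    x ≤ c * dW P Q := by
  rw [← div_le_iff₀' hc]
  exact le_csInf ⟨_, ⟨fun _ => none, fun _ _ _ h => by simp at h⟩, rfl⟩
    (by rintro _ ⟨M, rfl⟩; exact (div_le_iff₀' hc).mpr (h M))

lemma sModL1_nonneg (L : ℕ) (t : ℝ × ℝ) : 0 ≤ sModL1 L P Q t :=
  Finset.sum_nonneg fun _ _ => mul_nonneg (by positivity) (termL1_nonneg ..)

lemma sModL1_le_sum_augCost (L : ℕ) (M : AugMatching m n) (t : ℝ × ℝ) :
    sModL1 L P Q t ≤ ∑ j ∈ range (L + 2),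
      (2 : ℝ) ^ j / 2 * augCost M P Q (pairCut (2 ^ j / 2) t) (diagCut (2 ^ j / 2) t) :=
  Finset.sum_le_sum fun _ _ =>
    mul_le_mul_of_nonneg_left (termL1_cellCount_sub_le_augCost ..) (by positivity)

variable {T : ℝ}

lemma mul_setIntegral_augCost_le (hP : ∀ i k, P i k ∈ Set.Icc 0 T)
    (hQ : ∀ j k, Q j k ∈ Set.Icc 0 T) {s : ℝ} (hs : 0 < s) (M : AugMatching m n) :
    s * ∫ t in Set.Icc 0 T ×ˢ Set.Icc 0 T, augCost M P Q (pairCut s t) (diagCut s t) ≤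
      4 * √2 * T ^ 2 * matchCost P Q M := by
  have hK := volume_square_ne_top T
  rw [integral_augCost (integrableOn_pairCut hK) (integrableOn_diagCut hK), mul_augCost,
    matchCost_eq_augCost, mul_augCost]
  exact augCost_mono (fun i j => mul_setIntegral_pairCut_le hs (hP i) (hQ j))
    (fun i => mul_setIntegral_diagCut_le hs (hP i))
    (fun j => mul_setIntegral_diagCut_le hs (hQ j))

lemma setIntegral_sModL1_le (hP : ∀ i k, P i k ∈ Set.Icc 0 T)
    (hQ : ∀ j k, Q j k ∈ Set.Icc 0 T) (L : ℕ) (M : AugMatching m n) :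
    ∫ t in Set.Icc 0 T ×ˢ Set.Icc 0 T, sModL1 L P Q t ≤
      (L + 2) * (4 * √2 * T ^ 2) * matchCost P Q M := by
  have hK := volume_square_ne_top T
  have hint : ∀ s, IntegrableOn (fun t => augCost M P Q (pairCut s t) (diagCut s t))
      (Set.Icc 0 T ×ˢ Set.Icc 0 T) := fun s =>
    integrable_augCost (integrableOn_pairCut hK) (integrableOn_diagCut hK)
  calc ∫ t in Set.Icc 0 T ×ˢ Set.Icc 0 T, sModL1 L P Q t
      ≤ ∫ t in Set.Icc 0 T ×ˢ Set.Icc 0 T, ∑ j ∈ range (L + 2),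
          (2 : ℝ) ^ j / 2 * augCost M P Q (pairCut (2 ^ j / 2) t) (diagCut (2 ^ j / 2) t) :=
        integral_mono_of_nonneg (.of_forall (sModL1_nonneg L))
          (integrable_finsetSum _ fun j _ => (hint _).const_mul _)
          (.of_forall (sModL1_le_sum_augCost L M))
    _ = ∑ j ∈ range (L + 2), (2 : ℝ) ^ j / 2 * ∫ t in Set.Icc 0 T ×ˢ Set.Icc 0 T,
          augCost M P Q (pairCut (2 ^ j / 2) t) (diagCut (2 ^ j / 2) t) := by
        rw [integral_finsetSum _ fun j _ => (hint _).const_mul _]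
        simp only [integral_const_mul]
    _ ≤ ∑ j ∈ range (L + 2), 4 * √2 * T ^ 2 * matchCost P Q M :=
        Finset.sum_le_sum fun j _ => mul_setIntegral_augCost_le hP hQ (by positivity) M
    _ = (L + 2) * (4 * √2 * T ^ 2) * matchCost P Q M := by simp; ring

end Diagrams

/-- Lemma 4 (upper bound): there is a universal constant `C > 0` such that for
persistence diagrams `P`, `Q` in a square of side `Δ = 2^L`, with pairwise distances
`≥ 1` between distinct points and distance `≥ 1` to the diagonal, the expected modified
`L₁` distance over a uniform shift in `[0,Δ]²` satisfies
`E[|V^P - V^Q|_T] ≤ C · log Δ · d_W(P, Q)`. -/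
theorem expected_modL1_le :
    ∃ C : ℝ, 0 < C ∧
      ∀ (L m n : ℕ), 1 ≤ L → ∀ (P : Fin m → Pt) (Q : Fin n → Pt),
        (∀ u : Fin m ⊕ Fin n, ∀ k, Sum.elim P Q u k ∈ Set.Ico (0 : ℝ) (2 ^ L)) →
        (∀ u : Fin m ⊕ Fin n, Sum.elim P Q u 0 < Sum.elim P Q u 1) →
        (∀ u v : Fin m ⊕ Fin n, Sum.elim P Q u ≠ Sum.elim P Q v →
          1 ≤ dist (Sum.elim P Q u) (Sum.elim P Q v)) →
        (∀ u : Fin m ⊕ Fin n,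
          1 ≤ (Sum.elim P Q u 1 - Sum.elim P Q u 0) / Real.sqrt 2) →
        (∫ t in {t : ℝ × ℝ | t.1 ∈ Set.Icc (0 : ℝ) (2 ^ L) ∧ t.2 ∈ Set.Icc (0 : ℝ) (2 ^ L)},
            sModL1 L P Q t) / ((2 : ℝ) ^ L) ^ 2 ≤
          C * Real.logb 2 (2 ^ L) * dW P Q := by
  refine ⟨12 * √2, by positivity, fun L m n hL P Q hbox _ _ _ => ?_⟩
  have hP : ∀ i k, P i k ∈ Set.Icc (0 : ℝ) (2 ^ L) := fun i k =>
    Set.Ico_subset_Icc_self (hbox (.inl i) k)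
  have hQ : ∀ j k, Q j k ∈ Set.Icc (0 : ℝ) (2 ^ L) := fun j k =>
    Set.Ico_subset_Icc_self (hbox (.inr j) k)
  have hL3 : (L : ℝ) + 2 ≤ 3 * L := by
    have : (1 : ℝ) ≤ L := by exact_mod_cast hL
    linarith
  rw [Real.logb_pow, Real.logb_self_eq_one one_lt_two, mul_one, div_le_iff₀ (by positivity),
    mul_right_comm]
  refine le_mul_dW (by positivity) fun M => (setIntegral_sModL1_le hP hQ L M).trans ?_
  gcongr ?_ * _
  · exact matchCost_nonneg M
  · nlinarith [show 0 ≤ √2 * ((2 : ℝ) ^ L) ^ 2 by positivity]
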